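/- arXiv:1610.05145 — 2 statements merged into one kernel-verified Lean document; each statement's English description precedes it below -/
import Mathlib

section
/- Let C be a strict globularily generated double category. Then the transversal category τC of C equals the colimit (increasing union) of its horizontal filtration: τC = colim_k H_k^C, where each H_k^C is a category whose objects are the vertical morphisms of C and whose composition is horizontal composition. -/
universe u

/-! Basic raw categories and functors. -/


structure CatData : Type (u + 1) where
  Obj : Type u
  Hom : Obj → Obj → Type u
  id : (a : Obj) → Hom a a
  comp : {a b c : Obj} → Hom a b → Hom b c → Hom a c
  id_comp : ∀ {a b : Obj} (f : Hom a b), comp (id a) f = f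
  comp_id : ∀ {a b : Obj} (f : Hom a b), comp f (id b) = f
  assoc : ∀ {a b c d : Obj} (f : Hom a b) (g : Hom b c) (h : Hom c d),
    comp (comp f g) h = comp f (comp g h)

namespace CatData

/-- The canonical morphism associated to an equality of objects. -/
def eqHom (C : CatData.{u}) {a b : C.Obj} (h : a = b) : C.Hom a b := h ▸ C.id a

/-- Conjugation of a morphism by equalities of objects. -/
def conj (C : CatData.{u}) {a a' b b' : C.Obj} (h1 : a' = a) (h2 : b = b')
    (f : C.Hom a b) : C.Hom a' b' :=
  C.comp (C.eqHom h1) (C.comp f (C.eqHom h2))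

@[simp] theorem eqHom_refl (C : CatData.{u}) (a : C.Obj) : C.eqHom (rfl : a = a) = C.id a := rfl

@[simp] theorem eqHom_trans (C : CatData.{u}) {a b c : C.Obj} (h : a = b) (h' : b = c) :
    C.comp (C.eqHom h) (C.eqHom h') = C.eqHom (h.trans h') := by
  subst h; subst h'; exact C.id_comp _

@[simp] theorem conj_rfl (C : CatData.{u}) {a b : C.Obj} (f : C.Hom a b) :
    C.conj rfl rfl f = f := by
  show C.comp (C.id a) (C.comp f (C.id b)) = f
  rw [C.comp_id, C.id_comp]

theorem eqHom_conj (C : CatData.{u}) {a a' b b' : C.Obj} (h1 : a' = a) (h2 : b = b')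
    (h : a = b) : C.conj h1 h2 (C.eqHom h) = C.eqHom ((h1.trans h).trans h2) := by
  subst h1; subst h2; subst h
  exact C.conj_rfl _

end CatData

structure Fctr (C D : CatData.{u}) where
  obj : C.Obj → D.Obj
  map : {a b : C.Obj} → C.Hom a b → D.Hom (obj a) (obj b)
  map_id : ∀ a : C.Obj, map (C.id a) = D.id (obj a)
  map_comp : ∀ {a b c : C.Obj} (f : C.Hom a b) (g : C.Hom b c),
    map (C.comp f g) = D.comp (map f) (map g)

namespace Fctr

def idF (C : CatData.{u}) : Fctr C C where
  obj := fun a => a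
  map := fun f => f
  map_id := fun _ => rfl
  map_comp := fun _ _ => rfl

def compF {C D E : CatData.{u}} (F : Fctr C D) (G : Fctr D E) : Fctr C E where
  obj := fun a => G.obj (F.obj a)
  map := fun f => G.map (F.map f)
  map_id := fun a => by
    show G.map (F.map (C.id a)) = E.id (G.obj (F.obj a))
    rw [F.map_id, G.map_id]
  map_comp := fun f g => by
    show G.map (F.map (C.comp f g)) = E.comp (G.map (F.map f)) (G.map (F.map g))
    rw [F.map_comp, G.map_comp]

theorem map_eqHom {C D : CatData.{u}} (F : Fctr C D) {a b : C.Obj} (h : a = b) :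
    F.map (C.eqHom h) = D.eqHom (congrArg F.obj h) := by
  subst h; simpa using F.map_id a

end Fctr

/-! Pseudo double categories.

A (pseudo) double category is given by a category `C0` of objects and vertical
morphisms, a category `C1` of horizontal morphisms and 2-morphisms, source, target
and horizontal identity functors, a horizontal composition (given on objects of `C1`
for composable pairs, and on morphisms of `C1` for compatible pairs of 2-morphisms),
together with globular left/right identity and associativity isomorphisms. -/

structure DblCat : Type (u + 1) where
  C0 : CatData.{u}
  C1 : CatData.{u}
  s : Fctr C1 C0
  t : Fctr C1 C0
  i : Fctr C0 C1
  i_s_obj : ∀ a : C0.Obj, s.obj (i.obj a) = a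
  i_t_obj : ∀ a : C0.Obj, t.obj (i.obj a) = a
  i_s_map : ∀ {a b : C0.Obj} (u : C0.Hom a b),
    s.map (i.map u) = C0.conj (i_s_obj a) (i_s_obj b).symm u
  i_t_map : ∀ {a b : C0.Obj} (u : C0.Hom a b),
    t.map (i.map u) = C0.conj (i_t_obj a) (i_t_obj b).symm u
  hObj : (f g : C1.Obj) → t.obj f = s.obj g → C1.Obj
  hObj_s : ∀ (f g : C1.Obj) (w : t.obj f = s.obj g), s.obj (hObj f g w) = s.obj f
  hObj_t : ∀ (f g : C1.Obj) (w : t.obj f = s.obj g), t.obj (hObj f g w) = t.obj g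
  hMap : {f f' g g' : C1.Obj} → (w : t.obj f = s.obj g) → (w' : t.obj f' = s.obj g') →
    (Φ : C1.Hom f f') → (Ψ : C1.Hom g g') →
    C0.comp (t.map Φ) (C0.eqHom w') = C0.comp (C0.eqHom w) (s.map Ψ) →
    C1.Hom (hObj f g w) (hObj f' g' w')
  hMap_id : ∀ {f g : C1.Obj} (w : t.obj f = s.obj g) (pf : _),
    hMap w w (C1.id f) (C1.id g) pf = C1.id (hObj f g w)
  hMap_comp : ∀ {f f' f'' g g' g'' : C1.Obj}
    (w : t.obj f = s.obj g) (w' : t.obj f' = s.obj g') (w'' : t.obj f'' = s.obj g'')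
    (Φ : C1.Hom f f') (Φ' : C1.Hom f' f'') (Ψ : C1.Hom g g') (Ψ' : C1.Hom g' g'')
    (pf : _) (pf' : _) (pf'' : _),
    hMap w w'' (C1.comp Φ Φ') (C1.comp Ψ Ψ') pf'' =
      C1.comp (hMap w w' Φ Ψ pf) (hMap w' w'' Φ' Ψ' pf')
  hMap_s : ∀ {f f' g g' : C1.Obj} (w : t.obj f = s.obj g) (w' : t.obj f' = s.obj g')
    (Φ : C1.Hom f f') (Ψ : C1.Hom g g') (pf : _),
    s.map (hMap w w' Φ Ψ pf) = C0.conj (hObj_s f g w) (hObj_s f' g' w').symm (s.map Φ)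
  hMap_t : ∀ {f f' g g' : C1.Obj} (w : t.obj f = s.obj g) (w' : t.obj f' = s.obj g')
    (Φ : C1.Hom f f') (Ψ : C1.Hom g g') (pf : _),
    t.map (hMap w w' Φ Ψ pf) = C0.conj (hObj_t f g w) (hObj_t f' g' w').symm (t.map Ψ)
  lunit : (f : C1.Obj) → C1.Hom (hObj (i.obj (s.obj f)) f (i_t_obj (s.obj f))) f
  lunitInv : (f : C1.Obj) → C1.Hom f (hObj (i.obj (s.obj f)) f (i_t_obj (s.obj f)))
  lunit_iso₁ : ∀ f : C1.Obj, C1.comp (lunit f) (lunitInv f) = C1.id _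
  lunit_iso₂ : ∀ f : C1.Obj, C1.comp (lunitInv f) (lunit f) = C1.id _
  lunit_s : ∀ f : C1.Obj, ∃ h, s.map (lunit f) = C0.eqHom h
  lunit_t : ∀ f : C1.Obj, ∃ h, t.map (lunit f) = C0.eqHom h
  lunitInv_s : ∀ f : C1.Obj, ∃ h, s.map (lunitInv f) = C0.eqHom h
  lunitInv_t : ∀ f : C1.Obj, ∃ h, t.map (lunitInv f) = C0.eqHom h
  runit : (f : C1.Obj) → C1.Hom (hObj f (i.obj (t.obj f)) (i_s_obj (t.obj f)).symm) f
  runitInv : (f : C1.Obj) → C1.Hom f (hObj f (i.obj (t.obj f)) (i_s_obj (t.obj f)).symm)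
  runit_iso₁ : ∀ f : C1.Obj, C1.comp (runit f) (runitInv f) = C1.id _
  runit_iso₂ : ∀ f : C1.Obj, C1.comp (runitInv f) (runit f) = C1.id _
  runit_s : ∀ f : C1.Obj, ∃ h, s.map (runit f) = C0.eqHom h
  runit_t : ∀ f : C1.Obj, ∃ h, t.map (runit f) = C0.eqHom h
  runitInv_s : ∀ f : C1.Obj, ∃ h, s.map (runitInv f) = C0.eqHom h
  runitInv_t : ∀ f : C1.Obj, ∃ h, t.map (runitInv f) = C0.eqHom h
  assocC : {f g h : C1.Obj} → (w1 : t.obj f = s.obj g) → (w2 : t.obj g = s.obj h) →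
    C1.Hom (hObj (hObj f g w1) h ((hObj_t f g w1).trans w2))
      (hObj f (hObj g h w2) (w1.trans (hObj_s g h w2).symm))
  assocCInv : {f g h : C1.Obj} → (w1 : t.obj f = s.obj g) → (w2 : t.obj g = s.obj h) →
    C1.Hom (hObj f (hObj g h w2) (w1.trans (hObj_s g h w2).symm))
      (hObj (hObj f g w1) h ((hObj_t f g w1).trans w2))
  assoc_iso₁ : ∀ {f g h : C1.Obj} (w1 : t.obj f = s.obj g) (w2 : t.obj g = s.obj h),
    C1.comp (assocC w1 w2) (assocCInv w1 w2) = C1.id _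
  assoc_iso₂ : ∀ {f g h : C1.Obj} (w1 : t.obj f = s.obj g) (w2 : t.obj g = s.obj h),
    C1.comp (assocCInv w1 w2) (assocC w1 w2) = C1.id _
  assoc_s : ∀ {f g h : C1.Obj} (w1 : t.obj f = s.obj g) (w2 : t.obj g = s.obj h),
    ∃ hh, s.map (assocC w1 w2) = C0.eqHom hh
  assoc_t : ∀ {f g h : C1.Obj} (w1 : t.obj f = s.obj g) (w2 : t.obj g = s.obj h),
    ∃ hh, t.map (assocC w1 w2) = C0.eqHom hh
  assocInv_s : ∀ {f g h : C1.Obj} (w1 : t.obj f = s.obj g) (w2 : t.obj g = s.obj h),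
    ∃ hh, s.map (assocCInv w1 w2) = C0.eqHom hh
  assocInv_t : ∀ {f g h : C1.Obj} (w1 : t.obj f = s.obj g) (w2 : t.obj g = s.obj h),
    ∃ hh, t.map (assocCInv w1 w2) = C0.eqHom hh

namespace DblCat

/-- A 2-morphism is globular if its source and target are vertical identities. -/
def Globular (D : DblCat.{u}) {f g : D.C1.Obj} (Φ : D.C1.Hom f g) : Prop :=
  (∃ h, D.s.map Φ = D.C0.eqHom h) ∧ (∃ h, D.t.map Φ = D.C0.eqHom h)

/-- A 2-morphism is the horizontal identity of some vertical morphism. -/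
def IsHId (D : DblCat.{u}) {f g : D.C1.Obj} (Φ : D.C1.Hom f g) : Prop :=
  ∃ (a b : D.C0.Obj) (u : D.C0.Hom a b),
    f = D.i.obj a ∧ g = D.i.obj b ∧ HEq Φ (D.i.map u)

end DblCat

/-! Sub-double categories, globular generation, and the vertical/horizontal filtrations. -/

structure SubCat (C : CatData.{u}) where
  objs : Set C.Obj
  homs : ∀ ⦃a b : C.Obj⦄, C.Hom a b → Prop
  src_mem : ∀ {a b : C.Obj} {f : C.Hom a b}, homs f → a ∈ objs
  tgt_mem : ∀ {a b : C.Obj} {f : C.Hom a b}, homs f → b ∈ objs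
  id_mem : ∀ {a : C.Obj}, a ∈ objs → homs (C.id a)
  comp_mem : ∀ {a b c : C.Obj} {f : C.Hom a b} {g : C.Hom b c},
    homs f → homs g → homs (C.comp f g)

structure SubDbl (D : DblCat.{u}) where
  S0 : SubCat D.C0
  S1 : SubCat D.C1
  s_obj_mem : ∀ {f : D.C1.Obj}, f ∈ S1.objs → D.s.obj f ∈ S0.objs
  t_obj_mem : ∀ {f : D.C1.Obj}, f ∈ S1.objs → D.t.obj f ∈ S0.objs
  s_map_mem : ∀ {f g : D.C1.Obj} {Φ : D.C1.Hom f g}, S1.homs Φ → S0.homs (D.s.map Φ)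
  t_map_mem : ∀ {f g : D.C1.Obj} {Φ : D.C1.Hom f g}, S1.homs Φ → S0.homs (D.t.map Φ)
  i_obj_mem : ∀ {a : D.C0.Obj}, a ∈ S0.objs → D.i.obj a ∈ S1.objs
  i_map_mem : ∀ {a b : D.C0.Obj} {u : D.C0.Hom a b}, S0.homs u → S1.homs (D.i.map u)
  hObj_mem : ∀ {f g : D.C1.Obj} (w : D.t.obj f = D.s.obj g),
    f ∈ S1.objs → g ∈ S1.objs → D.hObj f g w ∈ S1.objs
  hMap_mem : ∀ {f f' g g' : D.C1.Obj} (w : D.t.obj f = D.s.obj g)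
    (w' : D.t.obj f' = D.s.obj g') (Φ : D.C1.Hom f f') (Ψ : D.C1.Hom g g') (pf : _),
    S1.homs Φ → S1.homs Ψ → S1.homs (D.hMap w w' Φ Ψ pf)
  lunit_mem : ∀ {f : D.C1.Obj}, f ∈ S1.objs → S1.homs (D.lunit f) ∧ S1.homs (D.lunitInv f)
  runit_mem : ∀ {f : D.C1.Obj}, f ∈ S1.objs → S1.homs (D.runit f) ∧ S1.homs (D.runitInv f)
  assoc_mem : ∀ {f g h : D.C1.Obj} (w1 : D.t.obj f = D.s.obj g) (w2 : D.t.obj g = D.s.obj h),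
    f ∈ S1.objs → g ∈ S1.objs → h ∈ S1.objs →
    S1.homs (D.assocC w1 w2) ∧ S1.homs (D.assocCInv w1 w2)

/-- A double category is globularily generated if the only sub-double category of it
containing all of its globular 2-morphisms is the double category itself. -/
def DblCat.GloballyGenerated (D : DblCat.{u}) : Prop :=
  ∀ S : SubDbl D,
    (∀ {f g : D.C1.Obj} (Φ : D.C1.Hom f g), D.Globular Φ → S.S1.homs Φ) →
    ((∀ a : D.C0.Obj, a ∈ S.S0.objs) ∧ (∀ {a b : D.C0.Obj} (u : D.C0.Hom a b), S.S0.homs u) ∧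
      (∀ f : D.C1.Obj, f ∈ S.S1.objs) ∧ (∀ {f g : D.C1.Obj} (Φ : D.C1.Hom f g), S.S1.homs Φ))

/-- The subcategory (closure) generated by a collection of morphisms. -/
inductive catClos (C : CatData.{u}) (S : ∀ ⦃a b : C.Obj⦄, C.Hom a b → Prop) :
    ∀ ⦃a b : C.Obj⦄, C.Hom a b → Prop
  | base {a b : C.Obj} {f : C.Hom a b} : S f → catClos C S f
  | id (a : C.Obj) : catClos C S (C.id a)
  | comp {a b c : C.Obj} {f : C.Hom a b} {g : C.Hom b c} :
      catClos C S f → catClos C S g → catClos C S (C.comp f g)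

/-- Closure of a collection of 2-morphisms under horizontal composition. -/
inductive horClos (D : DblCat.{u}) (S : ∀ ⦃f g : D.C1.Obj⦄, D.C1.Hom f g → Prop) :
    ∀ ⦃f g : D.C1.Obj⦄, D.C1.Hom f g → Prop
  | base {f g : D.C1.Obj} {Φ : D.C1.Hom f g} : S Φ → horClos D S Φ
  | hcomp {f f' g g' : D.C1.Obj} (w : D.t.obj f = D.s.obj g) (w' : D.t.obj f' = D.s.obj g')
      (Φ : D.C1.Hom f f') (Ψ : D.C1.Hom g g') (pf : _) :
      horClos D S Φ → horClos D S Ψ → horClos D S (D.hMap w w' Φ Ψ pf)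

/-- The horizontal filtration of a double category: `Hfil D k` is the collection
`H_{k+1}` of the paper; `Hfil D 0 = H₁` is the union of the globular 2-morphisms and
the horizontal identities of vertical morphisms, and `H_{k+1}` consists of the
horizontal composites of 2-morphisms of `V_k`. -/
def DblCat.Hfil (D : DblCat.{u}) : ℕ → ∀ ⦃f g : D.C1.Obj⦄, D.C1.Hom f g → Prop
  | 0 => fun _ _ Φ => D.Globular Φ ∨ D.IsHId Φ
  | k + 1 => horClos D (catClos D.C1 (D.Hfil k))

/-- The vertical filtration of a double category: `Vfil D k` is the collection of
morphisms of the subcategory `V_{k+1}` of `C1` generated by `H_{k+1}`. -/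
def DblCat.Vfil (D : DblCat.{u}) (k : ℕ) : ∀ ⦃f g : D.C1.Obj⦄, D.C1.Hom f g → Prop :=
  catClos D.C1 (D.Hfil k)

/-- Strictness of a double category: horizontal composition is strictly unital and
associative and the unitors and associator are identities. -/
structure DblCat.IsStrict (D : DblCat.{u}) : Prop where
  hObj_idl : ∀ f : D.C1.Obj, D.hObj (D.i.obj (D.s.obj f)) f (D.i_t_obj (D.s.obj f)) = f
  hObj_idr : ∀ f : D.C1.Obj, D.hObj f (D.i.obj (D.t.obj f)) (D.i_s_obj (D.t.obj f)).symm = f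
  hObj_assoc : ∀ {f g h : D.C1.Obj} (w1 : D.t.obj f = D.s.obj g) (w2 : D.t.obj g = D.s.obj h),
    D.hObj (D.hObj f g w1) h ((D.hObj_t f g w1).trans w2) =
      D.hObj f (D.hObj g h w2) (w1.trans ((D.hObj_s g h w2)).symm)
  lunit_eq : ∀ f : D.C1.Obj, D.lunit f = D.C1.eqHom (hObj_idl f)
  runit_eq : ∀ f : D.C1.Obj, D.runit f = D.C1.eqHom (hObj_idr f)
  assoc_eq : ∀ {f g h : D.C1.Obj} (w1 : D.t.obj f = D.s.obj g) (w2 : D.t.obj g = D.s.obj h),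
    D.assocC w1 w2 = D.C1.eqHom (hObj_assoc w1 w2)

/-! Double functors. -/

structure DblFctr (C D : DblCat.{u}) where
  F0 : Fctr C.C0 D.C0
  F1 : Fctr C.C1 D.C1
  s_obj : ∀ f : C.C1.Obj, D.s.obj (F1.obj f) = F0.obj (C.s.obj f)
  t_obj : ∀ f : C.C1.Obj, D.t.obj (F1.obj f) = F0.obj (C.t.obj f)
  s_map : ∀ {f g : C.C1.Obj} (Φ : C.C1.Hom f g),
    D.s.map (F1.map Φ) = D.C0.conj (s_obj f) (s_obj g).symm (F0.map (C.s.map Φ))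
  t_map : ∀ {f g : C.C1.Obj} (Φ : C.C1.Hom f g),
    D.t.map (F1.map Φ) = D.C0.conj (t_obj f) (t_obj g).symm (F0.map (C.t.map Φ))
  i_obj : ∀ a : C.C0.Obj, F1.obj (C.i.obj a) = D.i.obj (F0.obj a)
  i_map : ∀ {a b : C.C0.Obj} (u : C.C0.Hom a b),
    F1.map (C.i.map u) = D.C1.conj (i_obj a) (i_obj b).symm (D.i.map (F0.map u))
  hObj_comm : ∀ (f g : C.C1.Obj) (w : C.t.obj f = C.s.obj g),
    F1.obj (C.hObj f g w) =
      D.hObj (F1.obj f) (F1.obj g)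
        ((t_obj f).trans ((congrArg F0.obj w).trans (s_obj g).symm))
  hMap_comm : ∀ {f f' g g' : C.C1.Obj} (w : C.t.obj f = C.s.obj g)
    (w' : C.t.obj f' = C.s.obj g') (Φ : C.C1.Hom f f') (Ψ : C.C1.Hom g g')
    (pf : _) (pf' : _),
    F1.map (C.hMap w w' Φ Ψ pf) =
      D.C1.conj (hObj_comm f g w) (hObj_comm f' g' w').symm
        (D.hMap _ _ (F1.map Φ) (F1.map Ψ) pf')
  lunit_comm : ∀ f : C.C1.Obj, HEq (F1.map (C.lunit f)) (D.lunit (F1.obj f))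
  runit_comm : ∀ f : C.C1.Obj, HEq (F1.map (C.runit f)) (D.runit (F1.obj f))
  assoc_comm : ∀ {f g h : C.C1.Obj} (w1 : C.t.obj f = C.s.obj g)
    (w2 : C.t.obj g = C.s.obj h),
    HEq (F1.map (C.assocC w1 w2))
      (D.assocC ((t_obj f).trans ((congrArg F0.obj w1).trans (s_obj g).symm))
        ((t_obj g).trans ((congrArg F0.obj w2).trans (s_obj h).symm)))

/-!
Both halves of the argument exhibit a sub-double category containing every globular
2-morphism and invoke globular generation. For exhaustion, the 2-morphisms lying in
some `H_k` form such a sub-double category. For closure of `H_1` under horizontal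
composition, the only non-obvious case is `i u ∗ i v`: compatibility forces `u = v`,
and `i u ∗ i u = i u` is not among the axioms (strictness only gives `i a ∗ i a = i a`
on objects, and the unitors carry no naturality condition). It holds for every `u`
because the vertical morphisms with this property, together with the 2-morphisms whose
source and target have it, form a sub-double category containing the globular ones.
-/

namespace CatData

variable (C : CatData.{u})

def IsEqHom {a b : C.Obj} (f : C.Hom a b) : Prop :=
  ∃ h, f = C.eqHom h

variable {C}

theorem isEqHom_eqHom {a b : C.Obj} (h : a = b) : C.IsEqHom (C.eqHom h) :=
  ⟨h, rfl⟩

theorem comp_conj_eqHom {a a' b b' c : C.Obj} (h1 : a' = a) (h2 : b = b')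
    (f : C.Hom a b) (h3 : b' = c) :
    C.comp (C.conj h1 h2 f) (C.eqHom h3) = C.conj h1 (h2.trans h3) f := by
  subst h1 h2 h3
  rw [C.conj_rfl, C.eqHom_refl, C.comp_id]

theorem eqHom_comp_conj {a0 a a' b b' : C.Obj} (h0 : a0 = a') (h1 : a' = a)
    (h2 : b = b') (f : C.Hom a b) :
    C.comp (C.eqHom h0) (C.conj h1 h2 f) = C.conj (h0.trans h1) h2 f := by
  subst h0 h1 h2
  rw [C.conj_rfl, C.eqHom_refl, C.id_comp]

theorem conj_injective {a a' b b' : C.Obj} {h1 : a' = a} {h2 : b = b'}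
    {f g : C.Hom a b} (h : C.conj h1 h2 f = C.conj h1 h2 g) : f = g := by
  subst h1 h2
  rwa [C.conj_rfl, C.conj_rfl] at h

theorem isEqHom_conj_iff {a a' b b' : C.Obj} (h1 : a' = a) (h2 : b = b') (f : C.Hom a b) :
    C.IsEqHom (C.conj h1 h2 f) ↔ C.IsEqHom f := by
  subst h1 h2
  rw [C.conj_rfl]

theorem IsEqHom.of_eqHom_comp {a b c : C.Obj} {h : a = b} {f : C.Hom b c}
    (hf : C.IsEqHom (C.comp (C.eqHom h) f)) : C.IsEqHom f := by
  subst h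
  rwa [C.eqHom_refl, C.id_comp] at hf

theorem IsEqHom.of_comp_eqHom {a b c : C.Obj} {f : C.Hom a b} {h : b = c}
    (hf : C.IsEqHom (C.comp f (C.eqHom h))) : C.IsEqHom f := by
  subst h
  rwa [C.eqHom_refl, C.comp_id] at hf

theorem heq_id {a b : C.Obj} (h : a = b) : HEq (C.id a) (C.id b) := by
  subst h; rfl

theorem heq_comp {a a' b b' c c' : C.Obj} (ha : a = a') (hb : b = b') (hc : c = c')
    {f : C.Hom a b} {f' : C.Hom a' b'} {g : C.Hom b c} {g' : C.Hom b' c'}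
    (hf : HEq f f') (hg : HEq g g') : HEq (C.comp f g) (C.comp f' g') := by
  subst ha hb hc
  rw [eq_of_heq hf, eq_of_heq hg]

end CatData

namespace DblCat

variable (D : DblCat.{u})

theorem GloballyGenerated.induction (hD : D.GloballyGenerated)
    (P₀ : ∀ ⦃a b : D.C0.Obj⦄, D.C0.Hom a b → Prop)
    (P₁ : ∀ ⦃f g : D.C1.Obj⦄, D.C1.Hom f g → Prop)
    (id₀ : ∀ a, P₀ (D.C0.id a))
    (comp₀ : ∀ {a b c : D.C0.Obj} {u : D.C0.Hom a b} {v : D.C0.Hom b c},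
      P₀ u → P₀ v → P₀ (D.C0.comp u v))
    (id₁ : ∀ f, P₁ (D.C1.id f))
    (comp₁ : ∀ {f g h : D.C1.Obj} {Φ : D.C1.Hom f g} {Ψ : D.C1.Hom g h},
      P₁ Φ → P₁ Ψ → P₁ (D.C1.comp Φ Ψ))
    (s_map : ∀ {f g : D.C1.Obj} {Φ : D.C1.Hom f g}, P₁ Φ → P₀ (D.s.map Φ))
    (t_map : ∀ {f g : D.C1.Obj} {Φ : D.C1.Hom f g}, P₁ Φ → P₀ (D.t.map Φ))
    (i_map : ∀ {a b : D.C0.Obj} {u : D.C0.Hom a b}, P₀ u → P₁ (D.i.map u))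
    (hMap : ∀ {f f' g g' : D.C1.Obj} (w : D.t.obj f = D.s.obj g)
      (w' : D.t.obj f' = D.s.obj g') (Φ : D.C1.Hom f f') (Ψ : D.C1.Hom g g') (pf : _),
      P₁ Φ → P₁ Ψ → P₁ (D.hMap w w' Φ Ψ pf))
    (globular : ∀ {f g : D.C1.Obj} (Φ : D.C1.Hom f g), D.Globular Φ → P₁ Φ) :
    (∀ {a b : D.C0.Obj} (u : D.C0.Hom a b), P₀ u) ∧
      ∀ {f g : D.C1.Obj} (Φ : D.C1.Hom f g), P₁ Φ := by
  let S : SubDbl D :=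
  { S0 := ⟨Set.univ, P₀, fun _ => trivial, fun _ => trivial, fun _ => id₀ _, comp₀⟩
    S1 := ⟨Set.univ, P₁, fun _ => trivial, fun _ => trivial, fun _ => id₁ _, comp₁⟩
    s_obj_mem := fun _ => trivial
    t_obj_mem := fun _ => trivial
    s_map_mem := s_map
    t_map_mem := t_map
    i_obj_mem := fun _ => trivial
    i_map_mem := i_map
    hObj_mem := fun _ _ _ => trivial
    hMap_mem := hMap
    lunit_mem := fun {f} _ => ⟨globular _ ⟨D.lunit_s f, D.lunit_t f⟩,
      globular _ ⟨D.lunitInv_s f, D.lunitInv_t f⟩⟩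
    runit_mem := fun {f} _ => ⟨globular _ ⟨D.runit_s f, D.runit_t f⟩,
      globular _ ⟨D.runitInv_s f, D.runitInv_t f⟩⟩
    assoc_mem := fun w₁ w₂ _ _ _ => ⟨globular _ ⟨D.assoc_s w₁ w₂, D.assoc_t w₁ w₂⟩,
      globular _ ⟨D.assocInv_s w₁ w₂, D.assocInv_t w₁ w₂⟩⟩ }
  obtain ⟨-, h₀, -, h₁⟩ := hD S globular
  exact ⟨h₀, h₁⟩

variable {D}

theorem isEqHom_s_map_i_map_iff {a b : D.C0.Obj} (u : D.C0.Hom a b) :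
    D.C0.IsEqHom (D.s.map (D.i.map u)) ↔ D.C0.IsEqHom u := by
  rw [D.i_s_map, CatData.isEqHom_conj_iff]

theorem isEqHom_t_map_i_map_iff {a b : D.C0.Obj} (u : D.C0.Hom a b) :
    D.C0.IsEqHom (D.t.map (D.i.map u)) ↔ D.C0.IsEqHom u := by
  rw [D.i_t_map, CatData.isEqHom_conj_iff]

theorem globular_hMap {f f' g g' : D.C1.Obj} (w : D.t.obj f = D.s.obj g)
    (w' : D.t.obj f' = D.s.obj g') (Φ : D.C1.Hom f f') (Ψ : D.C1.Hom g g') (pf : _)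
    (hΦ : D.C0.IsEqHom (D.s.map Φ)) (hΨ : D.C0.IsEqHom (D.t.map Ψ)) :
    D.Globular (D.hMap w w' Φ Ψ pf) := by
  constructor
  · show D.C0.IsEqHom _
    rwa [D.hMap_s, CatData.isEqHom_conj_iff]
  · show D.C0.IsEqHom _
    rwa [D.hMap_t, CatData.isEqHom_conj_iff]

theorem globular_hMap_of_isHId_right {f f' g g' : D.C1.Obj}
    (w : D.t.obj f = D.s.obj g) (w' : D.t.obj f' = D.s.obj g') (Φ : D.C1.Hom f f')
    (Ψ : D.C1.Hom g g') (pf : _) (hΦ : D.Globular Φ) (hΨ : D.IsHId Ψ) :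
    D.Globular (D.hMap w w' Φ Ψ pf) := by
  obtain ⟨a, b, v, rfl, rfl, hv⟩ := hΨ
  obtain rfl := eq_of_heq hv
  obtain ⟨hΦs, h, hΦt⟩ := hΦ
  -- compatibility with the globular `Φ` makes `s (i v)`, hence `v`, an `eqHom`
  rw [hΦt, CatData.eqHom_trans] at pf
  have hv : D.C0.IsEqHom v :=
    (isEqHom_s_map_i_map_iff v).1 (pf ▸ CatData.isEqHom_eqHom _).of_eqHom_comp
  exact globular_hMap w w' _ _ _ hΦs ((isEqHom_t_map_i_map_iff v).2 hv)

theorem globular_hMap_of_isHId_left {f f' g g' : D.C1.Obj}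
    (w : D.t.obj f = D.s.obj g) (w' : D.t.obj f' = D.s.obj g') (Φ : D.C1.Hom f f')
    (Ψ : D.C1.Hom g g') (pf : _) (hΦ : D.IsHId Φ) (hΨ : D.Globular Ψ) :
    D.Globular (D.hMap w w' Φ Ψ pf) := by
  obtain ⟨a, b, u, rfl, rfl, hu⟩ := hΦ
  obtain rfl := eq_of_heq hu
  obtain ⟨⟨h, hΨs⟩, hΨt⟩ := hΨ
  rw [hΨs, CatData.eqHom_trans] at pf
  have hu : D.C0.IsEqHom u :=
    (isEqHom_t_map_i_map_iff u).1 (pf ▸ CatData.isEqHom_eqHom _).of_comp_eqHom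
  exact globular_hMap w w' _ _ _ ((isEqHom_s_map_i_map_iff u).2 hu) hΨt

theorem eq_of_i_map_compatible {a b : D.C0.Obj} {u v : D.C0.Hom a b}
    {w : D.t.obj (D.i.obj a) = D.s.obj (D.i.obj a)}
    {w' : D.t.obj (D.i.obj b) = D.s.obj (D.i.obj b)}
    (pf : D.C0.comp (D.t.map (D.i.map u)) (D.C0.eqHom w') =
      D.C0.comp (D.C0.eqHom w) (D.s.map (D.i.map v))) : u = v := by
  rw [D.i_t_map, D.i_s_map, CatData.comp_conj_eqHom, CatData.eqHom_comp_conj] at pf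
  exact CatData.conj_injective pf

theorem hMap_congr {f f' g g' : D.C1.Obj} (w : D.t.obj f = D.s.obj g)
    (w' : D.t.obj f' = D.s.obj g') {Φ Φ' : D.C1.Hom f f'} {Ψ Ψ' : D.C1.Hom g g'}
    (hΦ : Φ = Φ') (hΨ : Ψ = Ψ') (pf : _) (pf' : _) :
    D.hMap w w' Φ Ψ pf = D.hMap w w' Φ' Ψ' pf' := by
  subst hΦ hΨ; rfl

theorem IsStrict.hObj_i_obj_self (hs : D.IsStrict) (a : D.C0.Obj)
    (w : D.t.obj (D.i.obj a) = D.s.obj (D.i.obj a)) :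
    D.hObj (D.i.obj a) (D.i.obj a) w = D.i.obj a := by
  have hObj_congr : ∀ x, x = D.i.obj a → ∀ w₁ : D.t.obj x = D.s.obj (D.i.obj a),
      D.hObj x (D.i.obj a) w₁ = D.hObj (D.i.obj a) (D.i.obj a) w := by
    rintro x rfl _; rfl
  exact (hObj_congr _ (congrArg D.i.obj (D.i_s_obj a)) _).symm.trans (hs.hObj_idl _)

def HIdIdempotent {a b : D.C0.Obj} (u : D.C0.Hom a b) : Prop :=
  ∀ (w : D.t.obj (D.i.obj a) = D.s.obj (D.i.obj a))
    (w' : D.t.obj (D.i.obj b) = D.s.obj (D.i.obj b)) (pf : _),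
    HEq (D.hMap w w' (D.i.map u) (D.i.map u) pf) (D.i.map u)

section Strict

variable (hs : D.IsStrict)
include hs

theorem hIdIdempotent_id (a : D.C0.Obj) : D.HIdIdempotent (D.C0.id a) := by
  intro w w' pf
  have hi : D.i.map (D.C0.id a) = D.C1.id (D.i.obj a) := D.i.map_id a
  have pf₁ : D.C0.comp (D.t.map (D.C1.id (D.i.obj a))) (D.C0.eqHom w') =
      D.C0.comp (D.C0.eqHom w) (D.s.map (D.C1.id (D.i.obj a))) := by
    rw [D.t.map_id, D.s.map_id, D.C0.comp_id, D.C0.id_comp]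
  rw [D.hMap_congr w w' hi hi pf pf₁, D.hMap_id, hi]
  exact CatData.heq_id (hs.hObj_i_obj_self a w)

theorem HIdIdempotent.comp {a b c : D.C0.Obj} {u : D.C0.Hom a b} {v : D.C0.Hom b c}
    (hu : D.HIdIdempotent u) (hv : D.HIdIdempotent v) :
    D.HIdIdempotent (D.C0.comp u v) := by
  intro w w'' pf
  have w' : D.t.obj (D.i.obj b) = D.s.obj (D.i.obj b) :=
    (D.i_t_obj b).trans (D.i_s_obj b).symm
  have compatible : ∀ {x y : D.C0.Obj} (z : D.C0.Hom x y) w₁ w₂,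
      D.C0.comp (D.t.map (D.i.map z)) (D.C0.eqHom w₂) =
        D.C0.comp (D.C0.eqHom w₁) (D.s.map (D.i.map z)) := by
    intro x y z w₁ w₂
    rw [D.i_t_map, D.i_s_map, CatData.comp_conj_eqHom, CatData.eqHom_comp_conj]
  have hi : D.i.map (D.C0.comp u v) = D.C1.comp (D.i.map u) (D.i.map v) := D.i.map_comp u v
  rw [D.hMap_congr w w'' hi hi pf (hi ▸ pf),
    D.hMap_comp w w' w'' _ _ _ _ (compatible u w w') (compatible v w' w''), hi]
  exact CatData.heq_comp (hs.hObj_i_obj_self a w) (hs.hObj_i_obj_self b w')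
    (hs.hObj_i_obj_self c w'') (hu w w' _) (hv w' w'' _)

theorem hIdIdempotent_eqHom {a b : D.C0.Obj} (h : a = b) :
    D.HIdIdempotent (D.C0.eqHom h) := by
  subst h
  exact hIdIdempotent_id hs a

theorem HIdIdempotent.conj {a a' b b' : D.C0.Obj} (h₁ : a' = a) (h₂ : b = b')
    {u : D.C0.Hom a b} (hu : D.HIdIdempotent u) : D.HIdIdempotent (D.C0.conj h₁ h₂ u) :=
  (hIdIdempotent_eqHom hs h₁).comp hs (hu.comp hs (hIdIdempotent_eqHom hs h₂))

theorem hIdIdempotent_of_globallyGenerated (hD : D.GloballyGenerated) {a b : D.C0.Obj}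
    (u : D.C0.Hom a b) : D.HIdIdempotent u := by
  have of_isEqHom : ∀ {x y : D.C0.Obj} {z : D.C0.Hom x y}, D.C0.IsEqHom z →
      D.HIdIdempotent z := by
    rintro x y z ⟨h, rfl⟩
    exact hIdIdempotent_eqHom hs h
  refine (hD.induction D (fun _ _ u => D.HIdIdempotent u)
    (fun _ _ Φ => D.HIdIdempotent (D.s.map Φ) ∧ D.HIdIdempotent (D.t.map Φ))
    (hIdIdempotent_id hs) (fun hu hv => hu.comp hs hv) ?_ ?_ And.left And.right ?_ ?_ ?_).1 u
  · intro f
    rw [D.s.map_id, D.t.map_id]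
    exact ⟨hIdIdempotent_id hs _, hIdIdempotent_id hs _⟩
  · rintro f g h Φ Ψ ⟨hΦs, hΦt⟩ ⟨hΨs, hΨt⟩
    rw [D.s.map_comp, D.t.map_comp]
    exact ⟨hΦs.comp hs hΨs, hΦt.comp hs hΨt⟩
  · intro a b u hu
    rw [D.i_s_map, D.i_t_map]
    exact ⟨hu.conj hs _ _, hu.conj hs _ _⟩
  · intro f f' g g' w w' Φ Ψ pf hΦ hΨ
    rw [D.hMap_s, D.hMap_t]
    exact ⟨hΦ.1.conj hs _ _, hΨ.2.conj hs _ _⟩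
  · rintro f g Φ ⟨hΦs, hΦt⟩
    exact ⟨of_isEqHom hΦs, of_isEqHom hΦt⟩

theorem isHId_hMap (hD : D.GloballyGenerated) {f f' g g' : D.C1.Obj}
    (w : D.t.obj f = D.s.obj g) (w' : D.t.obj f' = D.s.obj g') (Φ : D.C1.Hom f f')
    (Ψ : D.C1.Hom g g') (pf : _) (hΦ : D.IsHId Φ) (hΨ : D.IsHId Ψ) :
    D.IsHId (D.hMap w w' Φ Ψ pf) := by
  obtain ⟨a, b, u, rfl, rfl, hu⟩ := hΦ
  obtain ⟨a', b', v, rfl, rfl, hv⟩ := hΨ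
  obtain rfl := eq_of_heq hu
  obtain rfl := eq_of_heq hv
  obtain rfl : a = a' := (D.i_t_obj a).symm.trans (w.trans (D.i_s_obj a'))
  obtain rfl : b = b' := (D.i_t_obj b).symm.trans (w'.trans (D.i_s_obj b'))
  obtain rfl := eq_of_i_map_compatible pf
  exact ⟨a, b, u, hs.hObj_i_obj_self a w, hs.hObj_i_obj_self b w',
    hIdIdempotent_of_globallyGenerated hs hD u w w' pf⟩

theorem hfil_zero_hMap (hD : D.GloballyGenerated) {f f' g g' : D.C1.Obj}
    (w : D.t.obj f = D.s.obj g) (w' : D.t.obj f' = D.s.obj g') (Φ : D.C1.Hom f f')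
    (Ψ : D.C1.Hom g g') (pf : _) (hΦ : D.Hfil 0 Φ) (hΨ : D.Hfil 0 Ψ) :
    D.Hfil 0 (D.hMap w w' Φ Ψ pf) := by
  rcases hΦ with hΦ | hΦ <;> rcases hΨ with hΨ | hΨ
  · exact Or.inl (globular_hMap w w' Φ Ψ pf hΦ.1 hΨ.2)
  · exact Or.inl (globular_hMap_of_isHId_right w w' Φ Ψ pf hΦ hΨ)
  · exact Or.inl (globular_hMap_of_isHId_left w w' Φ Ψ pf hΦ hΨ)
  · exact Or.inr (isHId_hMap hs hD w w' Φ Ψ pf hΦ hΨ)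

theorem hfil_hMap (hD : D.GloballyGenerated) (k : ℕ) {f f' g g' : D.C1.Obj}
    (w : D.t.obj f = D.s.obj g) (w' : D.t.obj f' = D.s.obj g') (Φ : D.C1.Hom f f')
    (Ψ : D.C1.Hom g g') (pf : _) (hΦ : D.Hfil k Φ) (hΨ : D.Hfil k Ψ) :
    D.Hfil k (D.hMap w w' Φ Ψ pf) := by
  cases k with
  | zero => exact hfil_zero_hMap hs hD w w' Φ Ψ pf hΦ hΨ
  | succ k => exact horClos.hcomp w w' Φ Ψ pf hΦ hΨ

end Strict

theorem Hfil.succ {k : ℕ} {f g : D.C1.Obj} {Φ : D.C1.Hom f g} (h : D.Hfil k Φ) :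
    D.Hfil (k + 1) Φ :=
  horClos.base (catClos.base h)

theorem Hfil.mono {k k' : ℕ} (hk : k ≤ k') {f g : D.C1.Obj} {Φ : D.C1.Hom f g}
    (h : D.Hfil k Φ) : D.Hfil k' Φ := by
  induction hk with
  | refl => exact h
  | step _ ih => exact ih.succ

theorem hfil_i_map (k : ℕ) {a b : D.C0.Obj} (u : D.C0.Hom a b) : D.Hfil k (D.i.map u) := by
  induction k with
  | zero => exact Or.inr ⟨a, b, u, rfl, rfl, HEq.rfl⟩
  | succ k ih => exact ih.succ

theorem exists_hfil (hD : D.GloballyGenerated) {f g : D.C1.Obj} (Φ : D.C1.Hom f g) :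
    ∃ k, D.Hfil k Φ := by
  refine (hD.induction D (fun _ _ _ => True) (fun _ _ Φ => ∃ k, D.Hfil k Φ)
    (fun _ => trivial) (fun _ _ => trivial) (fun _ => ⟨1, horClos.base (catClos.id _)⟩)
    ?_ (fun _ => trivial) (fun _ => trivial) (fun {_ _ u} _ => ⟨0, hfil_i_map 0 u⟩) ?_
    (fun _ h => ⟨0, Or.inl h⟩)).2 Φ
  · rintro f g h Φ Ψ ⟨k, hΦ⟩ ⟨k', hΨ⟩
    exact ⟨max k k' + 1, horClos.base (catClos.comp
      (catClos.base (hΦ.mono (le_max_left k k')))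
      (catClos.base (hΨ.mono (le_max_right k k'))))⟩
  · rintro f f' g g' w w' Φ Ψ pf ⟨k, hΦ⟩ ⟨k', hΨ⟩
    exact ⟨max k k' + 1, horClos.hcomp w w' Φ Ψ pf
      (hΦ.mono (le_max_left k k')).succ (hΨ.mono (le_max_right k k')).succ⟩

end DblCat

/-- if `D` is a strict globularily generated double category then its
transversal category `τD` (objects: vertical morphisms; morphisms: all 2-morphisms of
`D`; composition: horizontal composition) is the colimit (increasing union) of its
horizontal filtration: every 2-morphism of `D` lies in some term `H_k` of the
horizontal filtration, and each `H_k` is a category with objects the vertical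
morphisms of `D`, i.e. it contains the horizontal identity of every vertical morphism
(the identities of `τD`) and is closed under horizontal composition (the composition
of `τD`). -/
theorem stmt1 (D : DblCat.{u}) (hstrict : D.IsStrict) (hD : D.GloballyGenerated) :
    (∀ {f g : D.C1.Obj} (Φ : D.C1.Hom f g), ∃ k : ℕ, D.Hfil k Φ) ∧
    (∀ (k : ℕ) {a b : D.C0.Obj} (u : D.C0.Hom a b), D.Hfil k (D.i.map u)) ∧
    (∀ (k : ℕ) {f f' g g' : D.C1.Obj} (w : D.t.obj f = D.s.obj g)
        (w' : D.t.obj f' = D.s.obj g') (Φ : D.C1.Hom f f') (Ψ : D.C1.Hom g g') (pf : _),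
        D.Hfil k Φ → D.Hfil k Ψ → D.Hfil k (D.hMap w w' Φ Ψ pf)) :=
  ⟨DblCat.exists_hfil hD, DblCat.hfil_i_map, DblCat.hfil_hMap hstrict hD⟩
end

section
/- Let C and C' be double categories with C globularily generated, and let G, G' : C → C' be double functors. If the decorated horizontalizations H*G and H*G' of G and G' are equal, then G = G'. Consequently the decorated horizontalization functor H* is faithful on the category of globularily generated double categories and double functors. -/
universe u

/-- Two double functors have equal decorated horizontalizations `H*G = H*G'` iff they
have the same object functor (= same action on the decoration), the same action on
horizontal morphisms, and the same action on globular 2-morphisms. -/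
def SameDecH {C C' : DblCat.{u}} (G G' : DblFctr C C') : Prop :=
  G.F0 = G'.F0 ∧ (∀ f : C.C1.Obj, G.F1.obj f = G'.F1.obj f) ∧
    (∀ {f g : C.C1.Obj} (Φ : C.C1.Hom f g), C.Globular Φ → HEq (G.F1.map Φ) (G'.F1.map Φ))

/-! Two double functors that agree on the vertical category and on horizontal morphisms
agree on a sub-double category of their domain: the unitors and associators lie in it because
double functors preserve them (and hence their inverses), and horizontal composites lie in it
because double functors preserve horizontal composition. If the domain is globularily
generated and the functors also agree on globular 2-morphisms, this sub-double category is
everything, so the functors agree on all 2-morphisms and are equal. -/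

namespace CatData

variable (E : CatData.{u})

theorem id_heq_id {a a' : E.Obj} (ha : a = a') : HEq (E.id a) (E.id a') := by
  subst ha; rfl

theorem comp_heq_comp {a b c a' b' c' : E.Obj} (ha : a = a') (hb : b = b') (hc : c = c')
    {f : E.Hom a b} {f' : E.Hom a' b'} {g : E.Hom b c} {g' : E.Hom b' c'}
    (hf : HEq f f') (hg : HEq g g') : HEq (E.comp f g) (E.comp f' g') := by
  subst ha hb hc
  rw [eq_of_heq hf, eq_of_heq hg]

theorem conj_heq_conj {x x' a a' b b' y y' : E.Obj}
    (hx : x = x') (ha : a = a') (hb : b = b') (hy : y = y')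
    (h1 : x = a) (h2 : b = y) (h1' : x' = a') (h2' : b' = y')
    {f : E.Hom a b} {f' : E.Hom a' b'} (hf : HEq f f') :
    HEq (E.conj h1 h2 f) (E.conj h1' h2' f') := by
  subst hx ha hb hy
  rw [eq_of_heq hf]

theorem inv_heq_inv {x y x' y' : E.Obj} (hx : x = x') (hy : y = y')
    {f : E.Hom x y} {g : E.Hom y x} {f' : E.Hom x' y'} {g' : E.Hom y' x'}
    (hf : HEq f f') (hgf : E.comp g f = E.id y) (hfg' : E.comp f' g' = E.id x') :
    HEq g g' := by
  subst hx hy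
  obtain rfl := eq_of_heq hf
  refine heq_of_eq ?_
  calc g = E.comp g (E.comp f g') := by rw [hfg', E.comp_id]
    _ = g' := by rw [← E.assoc, hgf, E.id_comp]

theorem conj_comp_eqHom_eq {a b a₂ b₂ l m n r : E.Obj} {f : E.Hom a b} {g : E.Hom a₂ b₂}
    (hb : b = b₂) (ha : a = a₂) (hfg : E.comp f (E.eqHom hb) = E.comp (E.eqHom ha) g)
    (h₁ : l = a) (h₂ : b = m) (hr : m = r) (hl : l = n) (h₃ : n = a₂) (h₄ : b₂ = r) :
    E.comp (E.conj h₁ h₂ f) (E.eqHom hr) = E.comp (E.eqHom hl) (E.conj h₃ h₄ g) := by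
  subst hb ha h₁ h₂ hr hl
  simpa only [conj_rfl, eqHom_refl, comp_id, id_comp] using hfg

end CatData

def SubCat.univ (C : CatData.{u}) : SubCat C where
  objs := Set.univ
  homs := fun _ _ _ => True
  src_mem := fun _ => trivial
  tgt_mem := fun _ => trivial
  id_mem := fun _ => trivial
  comp_mem := fun _ _ => trivial

namespace Fctr

variable {C D : CatData.{u}} (F F' : Fctr C D)

def eqLocus (hobj : ∀ a, F.obj a = F'.obj a) : SubCat C where
  objs := Set.univ
  homs := fun _ _ φ => HEq (F.map φ) (F'.map φ)
  src_mem := fun _ => trivial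
  tgt_mem := fun _ => trivial
  id_mem := fun {a} _ => by
    simpa only [map_id] using D.id_heq_id (hobj a)
  comp_mem := fun {a b c f g} hf hg => by
    simpa only [map_comp] using D.comp_heq_comp (hobj a) (hobj b) (hobj c) hf hg

variable {F F'}

theorem eqLocus_inv_mem {hobj : ∀ a, F.obj a = F'.obj a} {x y : C.Obj}
    {f : C.Hom x y} {g : C.Hom y x} (hgf : C.comp g f = C.id y) (hfg : C.comp f g = C.id x)
    (hf : (eqLocus F F' hobj).homs f) : (eqLocus F F' hobj).homs g :=
  D.inv_heq_inv (hobj x) (hobj y) hf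
    (by rw [← F.map_comp, hgf, F.map_id]) (by rw [← F'.map_comp, hfg, F'.map_id])

theorem ext_of_heq (hobj : ∀ a, F.obj a = F'.obj a)
    (hmap : ∀ {a b : C.Obj} (f : C.Hom a b), HEq (F.map f) (F'.map f)) : F = F' := by
  obtain ⟨o, m, _, _⟩ := F
  obtain ⟨o', m', _, _⟩ := F'
  obtain rfl : o = o' := funext hobj
  obtain rfl : @m = @m' := by
    funext a b f
    exact eq_of_heq (hmap f)
  rfl

end Fctr

namespace DblCat

variable (D : DblCat.{u})

theorem hObj_congr {f g f' g' : D.C1.Obj} (hf : f = f') (hg : g = g')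
    (w : D.t.obj f = D.s.obj g) (w' : D.t.obj f' = D.s.obj g') :
    D.hObj f g w = D.hObj f' g' w' := by
  subst hf hg; rfl

theorem hMap_heq_hMap {f₁ g₁ f₂ g₂ f₁' g₁' f₂' g₂' : D.C1.Obj}
    (hf₁ : f₁ = f₁') (hg₁ : g₁ = g₁') (hf₂ : f₂ = f₂') (hg₂ : g₂ = g₂')
    (w : D.t.obj f₁ = D.s.obj g₁) (w' : D.t.obj f₂ = D.s.obj g₂)
    (v : D.t.obj f₁' = D.s.obj g₁') (v' : D.t.obj f₂' = D.s.obj g₂')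
    {Φ : D.C1.Hom f₁ f₂} {Φ' : D.C1.Hom f₁' f₂'} {Ψ : D.C1.Hom g₁ g₂} {Ψ' : D.C1.Hom g₁' g₂'}
    (hΦ : HEq Φ Φ') (hΨ : HEq Ψ Ψ') (pf pf') :
    HEq (D.hMap w w' Φ Ψ pf) (D.hMap v v' Φ' Ψ' pf') := by
  subst hf₁ hg₁ hf₂ hg₂
  obtain rfl := eq_of_heq hΦ
  obtain rfl := eq_of_heq hΨ
  rfl

theorem lunit_heq_lunit {f f' : D.C1.Obj} (hf : f = f') : HEq (D.lunit f) (D.lunit f') := by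
  subst hf; rfl

theorem runit_heq_runit {f f' : D.C1.Obj} (hf : f = f') : HEq (D.runit f) (D.runit f') := by
  subst hf; rfl

theorem assocC_heq_assocC {f g h f' g' h' : D.C1.Obj} (hf : f = f') (hg : g = g') (hh : h = h')
    (w₁ : D.t.obj f = D.s.obj g) (w₂ : D.t.obj g = D.s.obj h)
    (w₁' : D.t.obj f' = D.s.obj g') (w₂' : D.t.obj g' = D.s.obj h') :
    HEq (D.assocC w₁ w₂) (D.assocC w₁' w₂') := by
  subst hf hg hh; rfl

end DblCat

namespace DblFctr

variable {C D : DblCat.{u}}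

theorem hMap_compat (G : DblFctr C D) {f f' g g' : C.C1.Obj}
    (w : C.t.obj f = C.s.obj g) (w' : C.t.obj f' = C.s.obj g')
    (Φ : C.C1.Hom f f') (Ψ : C.C1.Hom g g')
    (pf : C.C0.comp (C.t.map Φ) (C.C0.eqHom w') = C.C0.comp (C.C0.eqHom w) (C.s.map Ψ)) :
    D.C0.comp (D.t.map (G.F1.map Φ))
        (D.C0.eqHom ((G.t_obj f').trans ((congrArg G.F0.obj w').trans (G.s_obj g').symm))) =
      D.C0.comp
        (D.C0.eqHom ((G.t_obj f).trans ((congrArg G.F0.obj w).trans (G.s_obj g).symm)))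
        (D.s.map (G.F1.map Ψ)) := by
  have hpf := congrArg G.F0.map pf
  rw [G.F0.map_comp, G.F0.map_comp, Fctr.map_eqHom, Fctr.map_eqHom] at hpf
  rw [G.t_map Φ, G.s_map Ψ]
  exact D.C0.conj_comp_eqHom_eq _ _ hpf _ _ _ _ _ _

theorem ext {G G' : DblFctr C D} (h0 : G.F0 = G'.F0) (h1 : G.F1 = G'.F1) : G = G' := by
  obtain ⟨F0, F1, _⟩ := G
  obtain ⟨F0', F1', _⟩ := G'
  cases h0; cases h1
  rfl

variable (G G' : DblFctr C D) (h0 : G.F0 = G'.F0) (hobj : ∀ f, G.F1.obj f = G'.F1.obj f)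

def eqLocus : SubDbl C where
  S0 := SubCat.univ C.C0
  S1 := Fctr.eqLocus G.F1 G'.F1 hobj
  s_obj_mem := fun _ => trivial
  t_obj_mem := fun _ => trivial
  s_map_mem := fun _ => trivial
  t_map_mem := fun _ => trivial
  i_obj_mem := fun _ => trivial
  i_map_mem := fun {a b u} _ => by
    show HEq (G.F1.map (C.i.map u)) (G'.F1.map (C.i.map u))
    rw [G.i_map u, G'.i_map u]
    exact D.C1.conj_heq_conj (hobj _) (by rw [h0]) (by rw [h0]) (hobj _) _ _ _ _ (by rw [h0])
  hObj_mem := fun _ _ _ => trivial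
  hMap_mem := fun {f f' g g'} w w' Φ Ψ pf hΦ hΨ => by
    show HEq (G.F1.map (C.hMap w w' Φ Ψ pf)) (G'.F1.map (C.hMap w w' Φ Ψ pf))
    rw [G.hMap_comm w w' Φ Ψ pf (G.hMap_compat w w' Φ Ψ pf),
      G'.hMap_comm w w' Φ Ψ pf (G'.hMap_compat w w' Φ Ψ pf)]
    exact D.C1.conj_heq_conj (hobj _) (D.hObj_congr (hobj f) (hobj g) _ _)
      (D.hObj_congr (hobj f') (hobj g') _ _) (hobj _) _ _ _ _
      (D.hMap_heq_hMap (hobj f) (hobj g) (hobj f') (hobj g') _ _ _ _ hΦ hΨ _ _)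
  lunit_mem := fun {f} _ =>
    have hl : HEq (G.F1.map (C.lunit f)) (G'.F1.map (C.lunit f)) :=
      (G.lunit_comm f).trans ((D.lunit_heq_lunit (hobj f)).trans (G'.lunit_comm f).symm)
    ⟨hl, Fctr.eqLocus_inv_mem (C.lunit_iso₂ f) (C.lunit_iso₁ f) hl⟩
  runit_mem := fun {f} _ =>
    have hr : HEq (G.F1.map (C.runit f)) (G'.F1.map (C.runit f)) :=
      (G.runit_comm f).trans ((D.runit_heq_runit (hobj f)).trans (G'.runit_comm f).symm)
    ⟨hr, Fctr.eqLocus_inv_mem (C.runit_iso₂ f) (C.runit_iso₁ f) hr⟩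
  assoc_mem := fun {f g h} w₁ w₂ _ _ _ =>
    have ha : HEq (G.F1.map (C.assocC w₁ w₂)) (G'.F1.map (C.assocC w₁ w₂)) :=
      (G.assoc_comm w₁ w₂).trans ((D.assocC_heq_assocC (hobj f) (hobj g) (hobj h) _ _ _ _).trans
        (G'.assoc_comm w₁ w₂).symm)
    ⟨ha, Fctr.eqLocus_inv_mem (C.assoc_iso₂ w₁ w₂) (C.assoc_iso₁ w₁ w₂) ha⟩

end DblFctr

/-- if `C` is globularily generated and two double functors
`G, G' : C → C'` have equal decorated horizontalizations, then `G = G'`.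
Consequently the decorated horizontalization functor is faithful on the category of
globularily generated double categories and double functors. -/
theorem stmt4 (C C' : DblCat.{u}) (hC : C.GloballyGenerated)
    (G G' : DblFctr C C') (h : SameDecH G G') : G = G' := by
  obtain ⟨h0, hobj, hglob⟩ := h
  obtain ⟨-, -, -, hall⟩ := hC (G.eqLocus G' h0 hobj) hglob
  exact DblFctr.ext h0 (Fctr.ext_of_heq hobj hall)
end
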